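/- arXiv:math/0608092 — 2 statements merged into one kernel-verified Lean document; each statement's English description precedes it below -/
import Mathlib

section
/- Let u : ℝ² → ℝ be a C² function solving L_u(L_u u) = 0 on ℝ², and let A, B, x(c,t) be as above. Then for all c, t ∈ ℝ one has (L_u u)(x(c,t), t) = A(c); that is, L_u u is constant along each characteristic parabola t ↦ (x(c,t), t). -/
/-!
Along the parabola `γ t = (x(c,t), t)` put `φ = ∂ₜx(c,·) - u ∘ γ` and `ψ = A(c) - (L_u u) ∘ γ`.
The chain rule gives `φ' = ψ - φ · (∂ₓu ∘ γ)` and, by the equation `L_u (L_u u) = 0`,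
`ψ' = -φ · (∂ₓ(L_u u) ∘ γ)`. This is a linear homogeneous system with continuous coefficients
and `φ 0 = ψ 0 = 0`, so Grönwall's inequality forces `φ = ψ = 0`.
-/

/-- The operator `L_u` acting on `v`:  `(L_u v)(x,t) = ∂v/∂t + u·∂v/∂x`,
with coordinates `(x,t)` on `ℝ × ℝ`. -/
noncomputable def Lop (u v : ℝ × ℝ → ℝ) : ℝ × ℝ → ℝ :=
  fun p => fderiv ℝ v p (0, 1) + u p * fderiv ℝ v p (1, 0)

theorem eq_zero_of_norm_deriv_le_mul_norm_of_le {E : Type*} [NormedAddCommGroup E]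
    [NormedSpace ℝ E] {y y' : ℝ → E} {C : ℝ → ℝ} {t₀ t : ℝ} (hC : Continuous C)
    (hy : ∀ s, HasDerivAt y (y' s) s) (hbound : ∀ s, ‖y' s‖ ≤ C s * ‖y s‖) (h₀ : y t₀ = 0)
    (ht : t₀ ≤ t) : y t = 0 := by
  obtain ⟨M, hM⟩ :=
    (isCompact_Icc (a := t₀) (b := t)).exists_bound_of_continuousOn hC.continuousOn
  refine eq_zero_of_abs_deriv_le_mul_abs_self_of_eq_zero_right (K := M)
    (fun s _ => (hy s).continuousAt.continuousWithinAt) (fun s _ => (hy s).hasDerivWithinAt)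
    h₀ (fun s hs => ?_) t ⟨ht, le_rfl⟩
  have hCM : C s ≤ M := (le_abs_self _).trans (hM s (Set.Ico_subset_Icc_self hs))
  exact (hbound s).trans (mul_le_mul_of_nonneg_right hCM (norm_nonneg _))

theorem eq_zero_of_norm_deriv_le_mul_norm {E : Type*} [NormedAddCommGroup E]
    [NormedSpace ℝ E] {y y' : ℝ → E} {C : ℝ → ℝ} {t₀ : ℝ} (hC : Continuous C)
    (hy : ∀ s, HasDerivAt y (y' s) s) (hbound : ∀ s, ‖y' s‖ ≤ C s * ‖y s‖) (h₀ : y t₀ = 0)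
    (t : ℝ) : y t = 0 := by
  rcases le_total t₀ t with ht | ht
  · exact eq_zero_of_norm_deriv_le_mul_norm_of_le hC hy hbound h₀ ht
  · have hrev := eq_zero_of_norm_deriv_le_mul_norm_of_le (y := fun s => y (-s))
      (y' := fun s => -y' (-s)) (hC.comp continuous_neg)
      (fun s => by simpa [Function.comp_def] using (hy (-s)).scomp s (hasDerivAt_neg s))
      (fun s => by simpa using hbound (-s)) (by simpa using h₀) (neg_le_neg ht)
    simpa using hrev

theorem contDiff_Lop {n : WithTop ℕ∞} {u v : ℝ × ℝ → ℝ} (hu : ContDiff ℝ n u)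
    (hv : ContDiff ℝ (n + 1) v) : ContDiff ℝ n (Lop u v) := by
  have hDv : ContDiff ℝ n (fderiv ℝ v) := hv.fderiv_right le_rfl
  exact (hDv.clm_apply contDiff_const).add (hu.mul (hDv.clm_apply contDiff_const))

theorem hasDerivAt_comp_graph_eq_Lop_add (u : ℝ × ℝ → ℝ) {v : ℝ × ℝ → ℝ} {x : ℝ → ℝ}
    {a t : ℝ} (hv : DifferentiableAt ℝ v (x t, t)) (hx : HasDerivAt x a t) :
    HasDerivAt (fun s => v (x s, s))
      (Lop u v (x t, t) + (a - u (x t, t)) * fderiv ℝ v (x t, t) (1, 0)) t := by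
  refine (hv.hasFDerivAt.comp_hasDerivAt (f := fun s => (x s, s)) t
    (hx.prodMk (hasDerivAt_id' t))).congr_deriv ?_
  have hdir : ((a, 1) : ℝ × ℝ) = (0, 1) + a • (1, 0) := by simp
  rw [hdir, map_add, map_smul, smul_eq_mul, Lop]
  ring

theorem norm_linear_system_rhs_le (φ ψ α β : ℝ) :
    ‖(ψ - φ * α, -(φ * β))‖ ≤ (1 + |α| + |β|) * ‖(φ, ψ)‖ := by
  have hφ : |φ| ≤ ‖(φ, ψ)‖ := norm_fst_le (φ, ψ)
  have hψ : |ψ| ≤ ‖(φ, ψ)‖ := norm_snd_le (φ, ψ)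
  have hn := norm_nonneg (φ, ψ)
  refine max_le ?_ ?_ <;> simp only [Real.norm_eq_abs, abs_neg, abs_mul]
  · calc |ψ - φ * α| ≤ |ψ| + |φ| * |α| := by simpa [abs_mul] using abs_sub ψ (φ * α)
      _ ≤ (1 + |α| + |β|) * ‖(φ, ψ)‖ := by
        nlinarith [mul_le_mul_of_nonneg_right hφ (abs_nonneg α), abs_nonneg β]
  · nlinarith [mul_le_mul_of_nonneg_right hφ (abs_nonneg β), abs_nonneg α]

theorem hasDerivAt_characteristic_defects {u : ℝ × ℝ → ℝ} {x : ℝ → ℝ} {a b : ℝ}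
    (hu : ContDiff ℝ 2 u) (hpde : ∀ p, Lop u (Lop u u) p = 0)
    (hx : ∀ t, HasDerivAt x (a * t + b) t) (t : ℝ) :
    HasDerivAt (fun s => (a * s + b - u (x s, s), a - Lop u u (x s, s)))
      ((a - Lop u u (x t, t)) - (a * t + b - u (x t, t)) * fderiv ℝ u (x t, t) (1, 0),
        -((a * t + b - u (x t, t)) * fderiv ℝ (Lop u u) (x t, t) (1, 0))) t := by
  have hw : ContDiff ℝ 1 (Lop u u) := contDiff_Lop (hu.of_le one_le_two) hu
  have hu' := hasDerivAt_comp_graph_eq_Lop_add u (hu.differentiable two_ne_zero _) (hx t)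
  have hw' := hasDerivAt_comp_graph_eq_Lop_add u (hw.differentiable one_ne_zero _) (hx t)
  rw [hpde, zero_add] at hw'
  refine HasDerivAt.prodMk ?_ ?_
  · exact ((((hasDerivAt_id' t).const_mul a).add_const b).sub hu').congr_deriv (by ring)
  · exact ((hasDerivAt_const t a).sub hw').congr_deriv (by ring)

theorem stmt1 (u : ℝ × ℝ → ℝ) (hu : ContDiff ℝ 2 u)
    (hpde : ∀ p : ℝ × ℝ, Lop u (Lop u u) p = 0)
    (A B : ℝ → ℝ) (hA : ∀ c, A c = Lop u u (c, 0)) (hB : ∀ c, B c = u (c, 0))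
    (X : ℝ → ℝ → ℝ) (hX : ∀ c t, X c t = A c / 2 * t ^ 2 + B c * t + c) :
    ∀ c t : ℝ, Lop u u (X c t, t) = A c := by
  intro c
  have hx : ∀ t, HasDerivAt (X c) (A c * t + B c) t := fun t => by
    rw [show X c = fun s => A c / 2 * s ^ 2 + B c * s + c from funext (hX c)]
    exact ((((hasDerivAt_pow 2 t).const_mul (A c / 2)).add
      ((hasDerivAt_id' t).const_mul (B c))).add_const c).congr_deriv (by norm_num; ring)
  have hC : Continuous fun s =>
      1 + |fderiv ℝ u (X c s, s) (1, 0)| + |fderiv ℝ (Lop u u) (X c s, s) (1, 0)| := by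
    have hw : ContDiff ℝ 1 (Lop u u) := contDiff_Lop (hu.of_le one_le_two) hu
    have hDu := hu.continuous_fderiv two_ne_zero
    have hDw := hw.continuous_fderiv one_ne_zero
    have hXc : Continuous (X c) := continuous_iff_continuousAt.2 fun t => (hx t).continuousAt
    fun_prop
  have hdefects := eq_zero_of_norm_deriv_le_mul_norm hC
    (hasDerivAt_characteristic_defects hu hpde hx) (fun s => norm_linear_system_rhs_le _ _ _ _)
    (t₀ := 0) (by simp [hX, hA, hB])
  intro t
  exact (sub_eq_zero.1 (congrArg Prod.snd (hdefects t))).symm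
end

section
/- Let A, B : ℝ → ℝ be C² functions such that for every c ∈ ℝ either (A'(c) = 0 and B'(c) = 0) or B'(c)² < 2·A'(c). Define F : ℝ² → ℝ² by F(c,t) := ((A(c)/2)·t² + B(c)·t + c, t). Then F is C², injective, and Ω := F(ℝ²) is an open subset of ℝ². -/
/-!
The partial derivative `∂x/∂c = A'(c) t² / 2 + B'(c) t + 1` is a quadratic in `t` that either is
the constant `1` or has positive leading coefficient and negative discriminant, so it never
vanishes. Hence every time slice `c ↦ x(c, t)` is strictly increasing, which gives injectivity
since `F` preserves `t`, and the Jacobian of `F` is invertible everywhere, so `F` is an open map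
by the inverse function theorem.
-/

open ContinuousLinearMap Function

section ProdSnd

variable {𝕜 E F : Type*} [NontriviallyNormedField 𝕜]
  [NormedAddCommGroup E] [NormedSpace 𝕜 E] [NormedAddCommGroup F] [NormedSpace 𝕜 F]

theorem isOpenMap_of_hasStrictFDerivAt_of_range_eq_top [CompleteSpace E] [CompleteSpace F]
    {f : E → F} {f' : E → E →L[𝕜] F}
    (hf : ∀ a, HasStrictFDerivAt f (f' a) a) (hsurj : ∀ a, (f' a).range = ⊤) :
    IsOpenMap f :=
  IsOpenMap.of_nhds_le fun a => ((hf a).map_nhds_eq_of_surj (hsurj a)).ge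

theorem range_prod_snd_eq_top {L : 𝕜 × F →L[𝕜] 𝕜} (hL : L (1, 0) ≠ 0) :
    (L.prod (snd 𝕜 𝕜 F)).range = ⊤ := by
  refine LinearMap.range_eq_top.2 fun ⟨a, b⟩ =>
    ⟨((L (1, 0))⁻¹ * (a - L (0, b)), b), Prod.ext ?_ rfl⟩
  change L (_, b) = a
  set s := (L (1, 0))⁻¹ * (a - L (0, b)) with hs
  have hsplit : ((s, b) : 𝕜 × F) = s • (1, 0) + (0, b) := by simp
  rw [hsplit, map_add, map_smul, smul_eq_mul, hs]
  field_simp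
  ring

theorem isOpenMap_prodMk_snd [CompleteSpace 𝕜] [CompleteSpace F]
    {g : 𝕜 × F → 𝕜} {g' : 𝕜 × F → 𝕜 × F →L[𝕜] 𝕜}
    (hg : ∀ p, HasStrictFDerivAt g (g' p) p) (hg' : ∀ p, g' p (1, 0) ≠ 0) :
    IsOpenMap fun p => (g p, p.2) :=
  isOpenMap_of_hasStrictFDerivAt_of_range_eq_top
    (fun p => (hg p).prodMk hasStrictFDerivAt_snd) fun p => range_prod_snd_eq_top (hg' p)

theorem hasDerivAt_left_of_hasFDerivAt {g : 𝕜 × F → 𝕜} {g' : 𝕜 × F →L[𝕜] 𝕜} {c : 𝕜} {t : F}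
    (hg : HasFDerivAt g g' (c, t)) : HasDerivAt (fun c => g (c, t)) (g' (1, 0)) c :=
  hg.comp_hasDerivAt c ((hasDerivAt_id c).prodMk (hasDerivAt_const c t))

end ProdSnd

theorem injective_prodMk_snd {α β γ : Type*} {g : α × β → γ}
    (hg : ∀ t, Injective fun c => g (c, t)) : Injective fun p => (g p, p.2) := by
  rintro ⟨c₁, t₁⟩ ⟨c₂, t₂⟩ h
  obtain ⟨hx, rfl⟩ := Prod.mk.inj h
  exact Prod.ext (hg t₁ hx) rfl

theorem quadratic_pos_of_discrim {a b : ℝ} (h : (a = 0 ∧ b = 0) ∨ b ^ 2 < 2 * a) (t : ℝ) :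
    0 < a / 2 * t ^ 2 + b * t + 1 := by
  rcases h with ⟨rfl, rfl⟩ | h
  · norm_num
  · have ha : 0 < a := by nlinarith [sq_nonneg b]
    nlinarith [sq_nonneg (a * t + b)]

/-- The paper's `x(c, t)`: the position at time `t` of the particle launched from `c` with
velocity `B c` and constant acceleration `A c`. -/
noncomputable def trajectory (A B : ℝ → ℝ) (p : ℝ × ℝ) : ℝ :=
  A p.1 / 2 * p.2 ^ 2 + B p.1 * p.2 + p.1

section Trajectory

variable {A B : ℝ → ℝ}

theorem contDiff_trajectory {n : WithTop ℕ∞} (hA : ContDiff ℝ n A) (hB : ContDiff ℝ n B) :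
    ContDiff ℝ n (trajectory A B) :=
  (((hA.comp contDiff_fst).div_const 2).mul (contDiff_snd.pow 2)).add
    ((hB.comp contDiff_fst).mul contDiff_snd) |>.add contDiff_fst

theorem hasDerivAt_trajectory_left {c : ℝ} (hA : DifferentiableAt ℝ A c)
    (hB : DifferentiableAt ℝ B c) (t : ℝ) :
    HasDerivAt (fun c => trajectory A B (c, t)) (deriv A c / 2 * t ^ 2 + deriv B c * t + 1) c :=
  ((hA.hasDerivAt.div_const 2).mul_const (t ^ 2)).add (hB.hasDerivAt.mul_const t)
    |>.add (hasDerivAt_id c)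

end Trajectory

theorem stmt10 (A B : ℝ → ℝ) (hA : ContDiff ℝ 2 A) (hB : ContDiff ℝ 2 B)
    (hcond : ∀ c : ℝ, (deriv A c = 0 ∧ deriv B c = 0) ∨ (deriv B c) ^ 2 < 2 * deriv A c)
    (F : ℝ × ℝ → ℝ × ℝ)
    (hF : ∀ c t : ℝ, F (c, t) = (A c / 2 * t ^ 2 + B c * t + c, t)) :
    ContDiff ℝ 2 F ∧ Function.Injective F ∧ IsOpen (Set.range F) := by
  obtain rfl : F = fun p => (trajectory A B p, p.2) := funext fun ⟨c, t⟩ => hF c t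
  have hx : ContDiff ℝ 2 (trajectory A B) := contDiff_trajectory hA hB
  have hderiv (c t : ℝ) := hasDerivAt_trajectory_left (hA.differentiable two_ne_zero c)
    (hB.differentiable two_ne_zero c) t
  have hpos (c t : ℝ) := quadratic_pos_of_discrim (hcond c) t
  refine ⟨hx.prodMk contDiff_snd, injective_prodMk_snd fun t => ?_, ?_⟩
  · exact (strictMono_of_deriv_pos fun c => (hderiv c t).deriv ▸ hpos c t).injective
  · refine (isOpenMap_prodMk_snd (fun p => hx.hasStrictFDerivAt two_ne_zero) fun ⟨c, t⟩ => ?_)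
      |>.isOpen_range
    rw [(hasDerivAt_left_of_hasFDerivAt
      ((hx.differentiable two_ne_zero (c, t)).hasFDerivAt)).unique (hderiv c t)]
    exact (hpos c t).ne'
end
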